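/- Let N = 2m+1 be an odd integer with N ≥ 3. Then there exist φ, ψ ∈ ℂ^N such that for every k = 0, 1, …, 2N−3: |P_φ(k/(2N−2))| = |P_ψ(k/(2N−2))| and |P_φ(k/(2N−2)) − P_φ((k−1)/(2N−2))| = |P_ψ(k/(2N−2)) − P_ψ((k−1)/(2N−2))|, and yet there is no λ ∈ ℂ with |λ| = 1 and ψ = λ·φ. -/

import Mathlib

/-!
Take `φ = e₀ + i·e_{N-1}` and `ψ = e₀ - i·e_{N-1}`. At the sample points `k/(2N-2)` the top
frequency `e^{2πi(N-1)x}` only takes the real values `(-1)^k`, so `P_ψ = conj P_φ` on the whole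
sampling grid; hence both the samples and their consecutive differences have equal moduli. Yet
`ψ` is not a multiple of `φ`: the multiplier would be `1` from the first coordinate and `-1` from
the last.
-/

open Real

/-- The analytic trigonometric polynomial `P_ψ(x) = ∑ ψ_j e^{2πijx}` associated to `ψ ∈ ℂ^N`. -/
noncomputable def trigPoly {N : ℕ} (ψ : Fin N → ℂ) (x : ℝ) : ℂ :=
  ∑ j : Fin N, ψ j * Complex.exp (2 * Real.pi * Complex.I * (j : ℕ) * x)

open ComplexConjugate

lemma trigPoly_add {N : ℕ} (φ ψ : Fin N → ℂ) (x : ℝ) :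
    trigPoly (φ + ψ) x = trigPoly φ x + trigPoly ψ x := by
  simp only [trigPoly, Pi.add_apply, add_mul, Finset.sum_add_distrib]

lemma trigPoly_single {N : ℕ} (j : Fin N) (a : ℂ) (x : ℝ) :
    trigPoly (Pi.single j a) x = a * Complex.exp (2 * π * Complex.I * (j : ℕ) * x) := by
  simp [trigPoly, Pi.single_apply, ite_mul]

lemma cexp_two_pi_I_mul_intCast_div {n : ℕ} (hn : n ≠ 0) (z : ℤ) :
    Complex.exp (2 * π * Complex.I * n * ((z / (2 * n) : ℝ) : ℂ)) = (-1) ^ z := by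
  have hn' : (n : ℂ) ≠ 0 := Nat.cast_ne_zero.mpr hn
  rw [← Complex.exp_pi_mul_I, ← Complex.exp_int_mul]
  congr 1
  push_cast
  field_simp

noncomputable def endpointVec (n : ℕ) (a b : ℂ) : Fin (n + 1) → ℂ :=
  Pi.single 0 a + Pi.single (Fin.last n) b

lemma trigPoly_endpointVec_intCast_div {n : ℕ} (hn : n ≠ 0) (a b : ℂ) (z : ℤ) :
    trigPoly (endpointVec n a b) (z / (2 * n)) = a + b * (-1) ^ z := by
  rw [endpointVec, trigPoly_add, trigPoly_single, trigPoly_single, Fin.val_last,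
    cexp_two_pi_I_mul_intCast_div hn]
  simp

lemma trigPoly_endpointVec_neg_I_intCast_div {n : ℕ} (hn : n ≠ 0) (z : ℤ) :
    trigPoly (endpointVec n 1 (-Complex.I)) (z / (2 * n))
      = conj (trigPoly (endpointVec n 1 Complex.I) (z / (2 * n))) := by
  simp [trigPoly_endpointVec_intCast_div hn]

lemma endpointVec_neg_I_ne_mul {n : ℕ} (hn : n ≠ 0) :
    ¬ ∃ l : ℂ, endpointVec n 1 (-Complex.I) = fun j => l * endpointVec n 1 Complex.I j := by
  rintro ⟨l, h⟩
  have h0 := congrFun h 0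
  have h1 := congrFun h (Fin.last n)
  simp only [endpointVec, Pi.add_apply, Pi.single_eq_same, ne_eq, Fin.zero_eq_last_iff, hn,
    not_false_eq_true, Pi.single_eq_of_ne, add_zero, mul_one, Fin.last_eq_zero_iff, zero_add] at h0 h1
  subst h0
  exact Complex.I_ne_zero (by linear_combination (-1 / 2 : ℂ) * h1)

theorem undersampled_discrete_deriv_counterexample_general
    (N : ℕ) (hN : 3 ≤ N) :
    ∃ φ ψ : Fin N → ℂ,
      (∀ k : ℕ, k ≤ 2 * N - 3 →
        ‖trigPoly φ (k / (2 * N - 2))‖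
          = ‖trigPoly ψ (k / (2 * N - 2))‖) ∧
      (∀ k : ℕ, k ≤ 2 * N - 3 →
        ‖trigPoly φ (k / (2 * N - 2)) - trigPoly φ (((k : ℝ) - 1) / (2 * N - 2))‖
          = ‖trigPoly ψ (k / (2 * N - 2)) - trigPoly ψ (((k : ℝ) - 1) / (2 * N - 2))‖) ∧
      ¬ ∃ l : ℂ, ‖l‖ = 1 ∧ ψ = fun j => l * φ j := by
  obtain ⟨n, rfl⟩ : ∃ n, N = n + 1 := ⟨N - 1, by omega⟩
  have hn : n ≠ 0 := by omega
  have hden : 2 * ((n + 1 : ℕ) : ℝ) - 2 = 2 * n := by push_cast; ring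
  have hk : ∀ k : ℕ, (k : ℝ) = ((k : ℤ) : ℝ) := fun k => (Int.cast_natCast k).symm
  have hk' : ∀ k : ℕ, (k : ℝ) - 1 = ((k - 1 : ℤ) : ℝ) := fun k => by push_cast; ring
  refine ⟨endpointVec n 1 Complex.I, endpointVec n 1 (-Complex.I), fun k _ => ?_,
    fun k _ => ?_, fun ⟨l, _, h⟩ => endpointVec_neg_I_ne_mul hn ⟨l, h⟩⟩
  · rw [hden, hk, trigPoly_endpointVec_neg_I_intCast_div hn, Complex.norm_conj]
  · rw [hden, hk', hk, trigPoly_endpointVec_neg_I_intCast_div hn,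
      trigPoly_endpointVec_neg_I_intCast_div hn, ← map_sub, Complex.norm_conj]

theorem undersampled_discrete_deriv_counterexample
    (N m : ℕ) (hNm : N = 2 * m + 1) (hN : 3 ≤ N) :
    ∃ φ ψ : Fin N → ℂ,
      (∀ k : ℕ, k ≤ 2 * N - 3 →
        ‖trigPoly φ (k / (2 * N - 2))‖
          = ‖trigPoly ψ (k / (2 * N - 2))‖) ∧
      (∀ k : ℕ, k ≤ 2 * N - 3 →
        ‖trigPoly φ (k / (2 * N - 2)) - trigPoly φ (((k : ℝ) - 1) / (2 * N - 2))‖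
          = ‖trigPoly ψ (k / (2 * N - 2)) - trigPoly ψ (((k : ℝ) - 1) / (2 * N - 2))‖) ∧
      ¬ ∃ l : ℂ, ‖l‖ = 1 ∧ ψ = fun j => l * φ j :=
  undersampled_discrete_deriv_counterexample_general N hN
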